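/- arXiv:0711.2642 — 2 statements merged into one kernel-verified Lean document; each statement's English description precedes it below -/
import Mathlib

section
/- Let X be a nonnegative real-valued random variable with E[X] = 1. Then for any A > 0 and any λ ∈ [0,1], E[log(1 + X·A)] ≤ E[log(1 + (λ + (1-λ)X)·A)]. -/
open MeasureTheory Real

/-!
Shrinking a random variable towards its mean can only increase the expectation of a concave
function of it: pointwise concavity gives
`λ g(E f) + (1 - λ) g(f) ≤ g(λ E f + (1 - λ) f)`, and after integrating, Jensen's inequality
`E g(f) ≤ g(E f)` bounds the left side from below by `E g(f)`.
The theorem is the case `g x = log (1 + x A)` on `[0, ∞)`.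
-/

section

variable {Ω E : Type*} [MeasurableSpace Ω] {μ : Measure Ω} [IsProbabilityMeasure μ]
  [NormedAddCommGroup E] [NormedSpace ℝ E] [CompleteSpace E] {s : Set E} {g : E → ℝ}
  {f : Ω → E}

theorem ConcaveOn.integral_comp_le_integral_comp_smul_integral_add_smul
    (hg : ConcaveOn ℝ s g) (hgc : ContinuousOn g s) (hsc : IsClosed s)
    (hfs : ∀ᵐ ω ∂μ, f ω ∈ s) (hfi : Integrable f μ) (hgi : Integrable (g ∘ f) μ)
    {t : ℝ} (ht : t ∈ Set.Icc (0 : ℝ) 1)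
    (hgi' : Integrable (fun ω => g (t • ∫ ω, f ω ∂μ + (1 - t) • f ω)) μ) :
    ∫ ω, g (f ω) ∂μ ≤ ∫ ω, g (t • ∫ ω, f ω ∂μ + (1 - t) • f ω) ∂μ := by
  obtain ⟨ht₀, ht₁⟩ := ht
  have hmean : ∫ ω, f ω ∂μ ∈ s := hg.1.integral_mem hsc hfs hfi
  have jensen : ∫ ω, g (f ω) ∂μ ≤ g (∫ ω, f ω ∂μ) :=
    hg.le_map_integral hgc hsc hfs hfi hgi
  have pointwise : ∀ᵐ ω ∂μ, t * g (∫ ω, f ω ∂μ) + (1 - t) * g (f ω)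
      ≤ g (t • ∫ ω, f ω ∂μ + (1 - t) • f ω) := by
    filter_upwards [hfs] with ω hω
    exact hg.2 hmean hω ht₀ (by linarith) (by ring)
  have integrated : t * g (∫ ω, f ω ∂μ) + (1 - t) * ∫ ω, g (f ω) ∂μ
      ≤ ∫ ω, g (t • ∫ ω, f ω ∂μ + (1 - t) • f ω) ∂μ := by
    have hgi_mul : Integrable (fun ω => (1 - t) * g (f ω)) μ := hgi.const_mul _
    calc t * g (∫ ω, f ω ∂μ) + (1 - t) * ∫ ω, g (f ω) ∂μ
        = ∫ ω, (t * g (∫ ω, f ω ∂μ) + (1 - t) * g (f ω)) ∂μ := by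
          rw [integral_add (integrable_const _) hgi_mul, integral_const,
            integral_const_mul, probReal_univ, one_smul]
      _ ≤ _ := integral_mono_ae ((integrable_const _).add hgi_mul) hgi' pointwise
  linarith [mul_le_mul_of_nonneg_left jensen ht₀]

end

theorem concaveOn_log_one_add_mul {A : ℝ} (hA : 0 ≤ A) :
    ConcaveOn ℝ (Set.Ici 0) fun x => log (1 + x * A) := by
  refine ⟨convex_Ici 0, fun x hx y hy a b ha hb hab => ?_⟩
  have hpos : ∀ z ∈ Set.Ici (0 : ℝ), 1 + z * A ∈ Set.Ioi 0 := fun z hz =>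
    show 0 < 1 + z * A by nlinarith [Set.mem_Ici.1 hz]
  have h := strictConcaveOn_log_Ioi.concaveOn.2 (hpos x hx) (hpos y hy) ha hb hab
  convert h using 2
  simp only [smul_eq_mul]
  linear_combination (-1 : ℝ) * hab

theorem continuousOn_log_one_add_mul {A : ℝ} (hA : 0 ≤ A) :
    ContinuousOn (fun x => log (1 + x * A)) (Set.Ici 0) := by
  refine ContinuousOn.log (by fun_prop) fun x hx => ?_
  nlinarith [Set.mem_Ici.1 hx]

/-- If `X ≥ 0` with `E[X] = 1`, then for `A > 0` and `λ ∈ [0,1]`,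
`E[log(1 + X A)] ≤ E[log(1 + (λ + (1-λ)X) A)]`. -/
theorem rate_gap_little_lemma
    {Ω : Type*} [MeasurableSpace Ω] (μ : Measure Ω) [IsProbabilityMeasure μ]
    (X : Ω → ℝ) (hX_nonneg : ∀ ω, 0 ≤ X ω) (hX_int : Integrable X μ)
    (hX_mean : ∫ ω, X ω ∂μ = 1)
    (A : ℝ) (hA : 0 < A) (lam : ℝ) (hlam : lam ∈ Set.Icc (0 : ℝ) 1)
    (h_int₁ : Integrable (fun ω => Real.log (1 + X ω * A)) μ)
    (h_int₂ : Integrable (fun ω => Real.log (1 + (lam + (1 - lam) * X ω) * A)) μ) :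
    ∫ ω, Real.log (1 + X ω * A) ∂μ
      ≤ ∫ ω, Real.log (1 + (lam + (1 - lam) * X ω) * A) ∂μ := by
  have key :=
    (concaveOn_log_one_add_mul hA.le).integral_comp_le_integral_comp_smul_integral_add_smul
      (continuousOn_log_one_add_mul hA.le) isClosed_Ici (.of_forall hX_nonneg) hX_int h_int₁ hlam
      (by simpa only [hX_mean, smul_eq_mul, mul_one] using h_int₂)
  simpa only [hX_mean, smul_eq_mul, mul_one] using key
end

section
/- For all integers M ≥ 2 and B ≥ 0, we have 2^B · Beta(2^B, M/(M-1)) ≤ 2^(-B/(M-1)), where Beta(x,y) = Γ(x)Γ(y)/Γ(x+y) is the Beta function. -/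
/-!
For a positive integer `n`, the functional equation of `Γ` turns `n · B(n, 1 + t)` into the finite
product `∏_{j<n} (1 + t/(j+1))⁻¹`. Bernoulli's inequality `(1 + 1/(j+1))^t ≤ 1 + t/(j+1)` for
`0 ≤ t ≤ 1` bounds each factor of `∏_{j<n} (1 + t/(j+1))` from below, and the resulting product
telescopes to `(n+1)^t ≥ n^t`. Taking `n = 2^B` and `t = 1/(M-1)` gives the theorem.
-/

open Real

/-- Euler's Beta function `B(x,y) = Γ(x)Γ(y)/Γ(x+y)`. -/
noncomputable def betaFn (x y : ℝ) : ℝ := Real.Gamma x * Real.Gamma y / Real.Gamma (x + y)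

open Finset

lemma Real.Gamma_natCast_add {s : ℝ} (hs : 0 < s) (n : ℕ) :
    Gamma (n + s) = (∏ j ∈ range n, ((j : ℝ) + s)) * Gamma s := by
  induction n with
  | zero => simp
  | succ n ih =>
    rw [Nat.cast_succ, add_right_comm, Gamma_add_one (by positivity), ih, prod_range_succ]
    ring

lemma natCast_mul_betaFn_eq_prod {s : ℝ} (hs : 0 < s) {n : ℕ} (hn : n ≠ 0) :
    n * betaFn n s = ∏ j ∈ range n, ((j : ℝ) + 1) / (j + s) := by
  have hGamma_succ : (n : ℝ) * Gamma n = ∏ j ∈ range n, ((j : ℝ) + 1) := by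
    rw [← Gamma_add_one (by exact_mod_cast hn), Gamma_natCast_add one_pos, Gamma_one, mul_one]
  have hGamma_s : Gamma s ≠ 0 := (Gamma_pos_of_pos hs).ne'
  have hprod : ∏ j ∈ range n, ((j : ℝ) + s) ≠ 0 := prod_ne_zero_iff.2 fun j _ => by positivity
  rw [betaFn, Gamma_natCast_add hs, prod_div_distrib, ← hGamma_succ]
  field_simp

lemma natCast_add_one_rpow_le_prod {t : ℝ} (ht0 : 0 ≤ t) (ht1 : t ≤ 1) (n : ℕ) :
    ((n : ℝ) + 1) ^ t ≤ ∏ j ∈ range n, (1 + t / ((j : ℝ) + 1)) := by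
  induction n with
  | zero => simp
  | succ n ih =>
    have hn : (0 : ℝ) < n + 1 := by positivity
    have hsplit : ((n + 1 : ℕ) : ℝ) + 1 = (n + 1) * (1 + 1 / (n + 1)) := by
      push_cast; field_simp
    have hbernoulli : (1 + 1 / ((n : ℝ) + 1)) ^ t ≤ 1 + t / (n + 1) := by
      rw [← mul_one_div t]
      exact rpow_one_add_le_one_add_mul_self (by linarith [one_div_pos.2 hn]) ht0 ht1
    rw [hsplit, mul_rpow hn.le (by positivity), prod_range_succ]
    exact mul_le_mul_of_nonneg ih hbernoulli (by positivity) (by positivity)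

lemma natCast_mul_betaFn_one_add_le {t : ℝ} (ht0 : 0 ≤ t) (ht1 : t ≤ 1) (n : ℕ) :
    n * betaFn n (1 + t) ≤ (n : ℝ) ^ (-t) := by
  rcases eq_or_ne n 0 with rfl | hn
  · simpa using rpow_nonneg le_rfl (-t)
  have hfactor : ∀ j : ℕ, ((j : ℝ) + 1) / (j + (1 + t)) = (1 + t / ((j : ℝ) + 1))⁻¹ := by
    intro j
    field_simp
    ring
  rw [natCast_mul_betaFn_eq_prod (by linarith) hn, prod_congr rfl fun j _ => hfactor j,
    prod_inv_distrib, rpow_neg (Nat.cast_nonneg n)]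
  refine inv_anti₀ (by positivity) ((rpow_le_rpow (Nat.cast_nonneg n) ?_ ht0).trans
    (natCast_add_one_rpow_le_prod ht0 ht1 n))
  linarith

/-- RVQ distortion bound: for integers `M ≥ 2` and `B ≥ 0`,
`2^B · Beta(2^B, M/(M-1)) ≤ 2^(-B/(M-1))`. -/
theorem rvq_distortion_bound (M B : ℕ) (hM : 2 ≤ M) :
    (2 : ℝ) ^ B * betaFn ((2 : ℝ) ^ B) ((M : ℝ) / ((M : ℝ) - 1))
      ≤ (2 : ℝ) ^ (-(B : ℝ) / ((M : ℝ) - 1)) := by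
  have hM1 : (1 : ℝ) ≤ (M : ℝ) - 1 := by
    have : (2 : ℝ) ≤ M := by exact_mod_cast hM
    linarith
  have hM_div : (M : ℝ) / ((M : ℝ) - 1) = 1 + 1 / ((M : ℝ) - 1) := by
    field_simp
    ring
  have hbound := natCast_mul_betaFn_one_add_le (t := 1 / ((M : ℝ) - 1)) (by positivity)
    ((div_le_one (by linarith)).2 hM1) (2 ^ B)
  rw [← hM_div, Nat.cast_pow, Nat.cast_ofNat] at hbound
  refine hbound.trans_eq ?_
  rw [← rpow_natCast, ← rpow_mul zero_le_two]
  ring_nf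
end
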